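/- arXiv:1910.10932 — 2 statements merged into one kernel-verified Lean document; each statement's English description precedes it below -/
import Mathlib

section
/- Let n be a positive odd integer and 0 ≤ k ≤ (n-1)/2, and let a and q be elements (q a root of Φ_n, or work modulo Φ_n(q) in a suitable ring). Then (aq;q^2)_{(n-1)/2-k} / (q^2/a;q^2)_{(n-1)/2-k} ≡ (-a)^((n-1)/2-2k) * (aq;q^2)_k / (q^2/a;q^2)_k * q^((n-1)^2/4 + k) modulo Φ_n(q), as rational functions of a and q. -/
/-!
Put `m = (n - 1) / 2`. Modulo `X ^ n - 1`, a multiple of `Φ_n`, we have `q ^ (2m + 1) = 1`, so every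
factor of `(aq; q²)_t` reflects: `1 - a q^(2j+1) = -a q^(2j+1) (1 - q^(2(m-j)) / a)`. Hence
`(aq; q²)_t (q²/a; q²)_(m-t) = (-a)^t q^(t²) (q²/a; q²)_m` for `t ≤ m`, and comparing `t = m - k` with
`t = k` gives the congruence. The denominators are units modulo `Φ_n` because `(1/a) ^ n ≠ 1`.
-/

open Polynomial

/-- The field ℚ(a) of rational functions in the parameter a. -/
noncomputable abbrev Ka : Type := RatFunc ℚ

/-- The field ℚ(a)(q) of rational functions in a and q. -/
noncomputable abbrev Kaq : Type := RatFunc Ka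

/-- The variable q. -/
noncomputable def q : Kaq := RatFunc.X

/-- The parameter a, viewed as a constant rational function in q. -/
noncomputable def a : Kaq := RatFunc.C (RatFunc.X : RatFunc ℚ)

/-- q-shifted factorial (x; s)_k = ∏_{j<k} (1 - x s^j). -/
noncomputable def qp (x s : Kaq) (k : ℕ) : Kaq :=
  ∏ j ∈ Finset.range k, (1 - x * s ^ j)

/-- Congruence of rational functions modulo a polynomial. -/
def modCong (x y : Kaq) (P : Polynomial Ka) : Prop :=
  ∃ r s : Polynomial Ka, IsCoprime s P ∧ P ∣ r ∧
    x - y = algebraMap (Polynomial Ka) Kaq r / algebraMap (Polynomial Ka) Kaq s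

variable {R : Type*} [CommRing R]

def qPochhammer (x s : R) (k : ℕ) : R := ∏ j ∈ Finset.range k, (1 - x * s ^ j)

theorem qPochhammer_succ (x s : R) (k : ℕ) :
    qPochhammer x s (k + 1) = qPochhammer x s k * (1 - x * s ^ k) :=
  Finset.prod_range_succ _ _

theorem map_qPochhammer {S : Type*} [CommRing S] (f : R →+* S) (x s : R) (k : ℕ) :
    f (qPochhammer x s k) = qPochhammer (f x) (f s) k := by
  simp [qPochhammer, map_prod]

section Reflection

variable {u v Q : R} {m : ℕ}

theorem qPochhammer_mul_qPochhammer_reflect (huv : u * v = 1) (hQ : Q ^ (2 * m + 1) = 1)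
    {t : ℕ} (ht : t ≤ m) :
    qPochhammer (u * Q) (Q ^ 2) t * qPochhammer (v * Q ^ 2) (Q ^ 2) (m - t) =
      (-u) ^ t * Q ^ t ^ 2 * qPochhammer (v * Q ^ 2) (Q ^ 2) m := by
  induction t with
  | zero => simp [qPochhammer]
  | succ t ih =>
    obtain ⟨d, rfl⟩ := Nat.exists_eq_add_of_lt ht
    have hfactor : 1 - u * Q * (Q ^ 2) ^ t =
        -u * Q ^ (2 * t + 1) * (1 - v * Q ^ 2 * (Q ^ 2) ^ d) := by
      linear_combination (-Q ^ (2 * (t + d + 1) + 1)) * huv - hQ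
    have ih' := ih (by omega)
    rw [show t + d + 1 - t = d + 1 by omega, qPochhammer_succ] at ih'
    rw [show t + d + 1 - (t + 1) = d by omega, qPochhammer_succ, hfactor]
    linear_combination (-u * Q ^ (2 * t + 1)) * ih'

theorem qPochhammer_reflect (huv : u * v = 1) (hQ : Q ^ (2 * m + 1) = 1) {k : ℕ} (hk : k ≤ m) :
    qPochhammer (u * Q) (Q ^ 2) (m - k) * qPochhammer (v * Q ^ 2) (Q ^ 2) k =
      (-u) ^ m * v ^ (2 * k) * Q ^ (m ^ 2 + k) *
        (qPochhammer (u * Q) (Q ^ 2) k * qPochhammer (v * Q ^ 2) (Q ^ 2) (m - k)) := by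
  have h₁ := qPochhammer_mul_qPochhammer_reflect huv hQ (Nat.sub_le m k)
  have h₂ := qPochhammer_mul_qPochhammer_reflect huv hQ hk
  rw [Nat.sub_sub_self hk] at h₁
  rw [h₁, h₂]
  obtain ⟨d, rfl⟩ := Nat.exists_eq_add_of_le hk
  have hone : (-u * v) ^ (2 * k) * (Q ^ (2 * (k + d) + 1)) ^ k = 1 := by
    rw [neg_mul, (even_two_mul k).neg_pow, huv, hQ, one_pow, one_pow, one_mul]
  rw [Nat.add_sub_cancel_left]
  linear_combination (-((-u) ^ d * Q ^ d ^ 2 * qPochhammer (v * Q ^ 2) (Q ^ 2) (k + d))) * hone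

theorem X_pow_sub_one_dvd_qPochhammer_reflect (huv : u * v = 1) {k : ℕ} (hk : k ≤ m) :
    (X ^ (2 * m + 1) - 1 : R[X]) ∣
      qPochhammer (C u * X) (X ^ 2) (m - k) * qPochhammer (C v * X ^ 2) (X ^ 2) k -
        C ((-u) ^ m * v ^ (2 * k)) * X ^ (m ^ 2 + k) * qPochhammer (C u * X) (X ^ 2) k *
          qPochhammer (C v * X ^ 2) (X ^ 2) (m - k) := by
  rw [← AdjoinRoot.mk_eq_zero, map_sub, sub_eq_zero]
  have hQ : AdjoinRoot.root (X ^ (2 * m + 1) - 1 : R[X]) ^ (2 * m + 1) = 1 := by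
    have h := AdjoinRoot.mk_self (f := (X ^ (2 * m + 1) - 1 : R[X]))
    rwa [map_sub, map_pow, AdjoinRoot.mk_X, map_one, sub_eq_zero] at h
  have huv' : AdjoinRoot.of _ u * AdjoinRoot.of (X ^ (2 * m + 1) - 1 : R[X]) v = 1 := by
    rw [← map_mul, huv, map_one]
  simpa [map_qPochhammer, mul_assoc] using qPochhammer_reflect huv' hQ hk

end Reflection

theorem isCoprime_one_sub_C_mul_X_pow {K : Type*} [Field K] {c : K} {n : ℕ} (hc : c ^ n ≠ 1)
    (e : ℕ) : IsCoprime (1 - C c * X ^ e) (X ^ n - 1 : K[X]) := by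
  have hdvd := sub_dvd_pow_sub_pow (1 : K[X]) (C c * X ^ e) n
  rw [one_pow] at hdvd
  refine IsCoprime.of_isCoprime_of_dvd_left ?_ hdvd
  obtain ⟨w, hw⟩ : (X ^ n - 1 : K[X]) ∣ (X ^ n) ^ e - 1 := by
    simpa only [one_pow] using sub_dvd_pow_sub_pow (X ^ n : K[X]) 1 e
  have hunit : IsUnit (1 - C c ^ n) := by
    rw [← C_pow, ← C_1, ← C_sub]
    exact isUnit_C.mpr (sub_ne_zero.mpr hc.symm).isUnit
  have hsplit : 1 - (C c * X ^ e) ^ n = 1 - C c ^ n + (X ^ n - 1) * (-C c ^ n * w) := by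
    linear_combination (-C c ^ n) * hw
  rw [hsplit]
  exact (isCoprime_one_left.of_isCoprime_of_dvd_left hunit.dvd).add_mul_left_left _

theorem isCoprime_qPochhammer {K : Type*} [Field K] {c : K} {n : ℕ} (hc : c ^ n ≠ 1)
    (e s t : ℕ) : IsCoprime (qPochhammer (C c * X ^ e) (X ^ s) t) (X ^ n - 1 : K[X]) :=
  IsCoprime.prod_left fun j _ => by
    simpa [mul_assoc, ← pow_mul, ← pow_add] using isCoprime_one_sub_C_mul_X_pow hc (e + s * j)

theorem RatFunc.X_pow_ne_one {K : Type*} [Field K] {n : ℕ} (hn : n ≠ 0) :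
    (RatFunc.X : RatFunc K) ^ n ≠ 1 := by
  rw [← RatFunc.algebraMap_X, ← map_pow, ← map_one (algebraMap K[X] (RatFunc K)), Ne,
    (RatFunc.algebraMap_injective K).eq_iff]
  intro h
  simpa [hn] using congrArg natDegree h

theorem modCong_div_div {P N₁ D₁ N₂ D₂ : Ka[X]} (hP : ¬IsUnit P) (h₁ : IsCoprime D₁ P)
    (h₂ : IsCoprime D₂ P) (h : P ∣ N₁ * D₂ - N₂ * D₁) :
    modCong (algebraMap Ka[X] Kaq N₁ / algebraMap Ka[X] Kaq D₁)
      (algebraMap Ka[X] Kaq N₂ / algebraMap Ka[X] Kaq D₂) P := by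
  have hD : ∀ {D : Ka[X]}, IsCoprime D P → algebraMap Ka[X] Kaq D ≠ 0 := fun hD h0 =>
    hP (isCoprime_zero_left.mp (RatFunc.algebraMap_injective Ka (h0.trans (map_zero _).symm) ▸ hD))
  refine ⟨_, _, h₁.mul_left h₂, h, ?_⟩
  rw [div_sub_div _ _ (hD h₁) (hD h₂), map_sub, map_mul, map_mul, map_mul,
    mul_comm (algebraMap Ka[X] Kaq D₁)]

theorem qp_eq_qPochhammer (x s : Kaq) (k : ℕ) : qp x s k = qPochhammer x s k := rfl

theorem algebraMap_C_X_eq_a : algebraMap Ka[X] Kaq (C RatFunc.X) = a :=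
  RatFunc.algebraMap_C _

theorem algebraMap_C_X_inv_eq_a_inv : algebraMap Ka[X] Kaq (C RatFunc.X⁻¹) = a⁻¹ := by
  rw [RatFunc.algebraMap_C, map_inv₀]
  rfl

theorem a_ne_zero : a ≠ 0 :=
  (_root_.map_ne_zero RatFunc.C).mpr RatFunc.X_ne_zero

theorem qp_a_mul_q (t : ℕ) :
    qp (a * q) (q ^ 2) t = algebraMap Ka[X] Kaq (qPochhammer (C RatFunc.X * X) (X ^ 2) t) := by
  rw [qp_eq_qPochhammer, map_qPochhammer, map_mul, map_pow, algebraMap_C_X_eq_a,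
    RatFunc.algebraMap_X, q]

theorem qp_q_sq_div_a (t : ℕ) :
    qp (q ^ 2 / a) (q ^ 2) t =
      algebraMap Ka[X] Kaq (qPochhammer (C RatFunc.X⁻¹ * X ^ 2) (X ^ 2) t) := by
  rw [qp_eq_qPochhammer, map_qPochhammer, map_mul, map_pow, algebraMap_C_X_inv_eq_a_inv,
    RatFunc.algebraMap_X, q, div_eq_mul_inv, mul_comm]

theorem neg_a_zpow (m k : ℕ) :
    (-a) ^ ((m : ℤ) - (2 * k : ℕ)) =
      algebraMap Ka[X] Kaq (C ((-RatFunc.X) ^ m * RatFunc.X⁻¹ ^ (2 * k))) := by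
  rw [zpow_sub₀ (neg_ne_zero.mpr a_ne_zero), zpow_natCast, zpow_natCast,
    (even_two_mul k).neg_pow, C_mul, C_pow, C_pow, C_neg, map_mul, map_pow, map_pow, map_neg,
    algebraMap_C_X_eq_a, algebraMap_C_X_inv_eq_a_inv, inv_pow, div_eq_mul_inv]

theorem isCoprime_qPochhammer_cyclotomic {n : ℕ} (hn : n ≠ 0) (t : ℕ) :
    IsCoprime (qPochhammer (C RatFunc.X⁻¹ * X ^ 2) (X ^ 2) t) (cyclotomic n Ka) := by
  have hpow : (RatFunc.X⁻¹ : Ka) ^ n ≠ 1 := by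
    rw [inv_pow]
    exact inv_ne_one.mpr (RatFunc.X_pow_ne_one hn)
  exact (isCoprime_qPochhammer hpow 2 2 t).of_isCoprime_of_dvd_right
    (cyclotomic.dvd_X_pow_sub_one _ _)

/-- Lemma 2.1 of Guo–Schlosser. -/
theorem stmt10 (n : ℕ) (hodd : Odd n) (hpos : 0 < n) (k : ℕ) (hk : k ≤ (n - 1) / 2) :
    modCong
      (qp (a * q) (q ^ 2) ((n - 1) / 2 - k) / qp (q ^ 2 / a) (q ^ 2) ((n - 1) / 2 - k))
      ((-a) ^ (((n : ℤ) - 1) / 2 - 2 * (k : ℤ)) * qp (a * q) (q ^ 2) k /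
        qp (q ^ 2 / a) (q ^ 2) k * q ^ (((n - 1) / 2) ^ 2 + k))
      (cyclotomic n Ka) := by
  obtain ⟨m, rfl⟩ := hodd
  have hm : (2 * m + 1 - 1) / 2 = m := by omega
  have hexp : (((2 * m + 1 : ℕ) : ℤ) - 1) / 2 - 2 * (k : ℤ) = (m : ℤ) - (2 * k : ℕ) := by
    push_cast; omega
  rw [hm] at hk ⊢
  rw [hexp]
  have hrhs : (-a) ^ ((m : ℤ) - (2 * k : ℕ)) * qp (a * q) (q ^ 2) k / qp (q ^ 2 / a) (q ^ 2) k *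
      q ^ (m ^ 2 + k) =
        algebraMap Ka[X] Kaq (C ((-RatFunc.X) ^ m * RatFunc.X⁻¹ ^ (2 * k)) * X ^ (m ^ 2 + k) *
          qPochhammer (C RatFunc.X * X) (X ^ 2) k) /
        algebraMap Ka[X] Kaq (qPochhammer (C RatFunc.X⁻¹ * X ^ 2) (X ^ 2) k) := by
    rw [neg_a_zpow, qp_a_mul_q, qp_q_sq_div_a]
    simp only [map_mul, map_pow, RatFunc.algebraMap_X, q]
    ring
  rw [qp_a_mul_q, qp_q_sq_div_a, hrhs]
  refine modCong_div_div (not_isUnit_of_degree_pos _ (degree_cyclotomic_pos _ Ka hpos))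
    (isCoprime_qPochhammer_cyclotomic hpos.ne' (m - k))
    (isCoprime_qPochhammer_cyclotomic hpos.ne' k) ((cyclotomic.dvd_X_pow_sub_one _ _).trans ?_)
  simpa only [mul_assoc] using
    X_pow_sub_one_dvd_qPochhammer_reflect (mul_inv_cancel₀ RatFunc.X_ne_zero) hk
end

section
/- For every prime p ≡ 3 (mod 4), the rising-factorial ratio (3/4)_{(p-1)/2} / (5/4)_{(p-1)/2} is congruent modulo p^2 (in Z_(p)) to -(p/16) · Γ_p(1/4)^4, where Γ_p is the Morita p-adic Gamma function. -/
/-!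
Write `p = 4q + 3`. Both sides are `p` times a `p`-adic integer, so it suffices to compare the
cofactors modulo `p`. Since `1/4 ≡ q + 1 (mod p)` and, by Wilson's theorem, the values of `Γ_p` on
`ℕ` are `p`-periodic modulo `p`, continuity and the density of `ℕ` in `ℤ_p` give
`Γ_p(1/4) ≡ Γ_p(q + 1) = (-1)^(q+1) q! (mod p)`. On the other side, modulo `p` we have
`3/4 ≡ -q` and `5/4 ≡ q + 2`, so after removing the factor `4q + 3 = p` the numerator is
`±16^q (q!)^2` and the denominator is `4^(2q+1) (3q+2)!/(q+1)!`; Wilson's theorem in the form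
`(3q+2)! q! ≡ (-1)^(q+1)` finishes the comparison.
-/

/-- The rising factorial of a rational number. -/
def risingFac (a : ℚ) (k : ℕ) : ℚ := ∏ j ∈ Finset.range k, (a + j)

/-- The values of Morita's p-adic Gamma function at natural numbers:
Γ_p(n) = (-1)^n ∏_{0<j<n, p∤j} j. -/
noncomputable def moritaGammaNat (p : ℕ) [Fact p.Prime] (n : ℕ) : ℤ_[p] :=
  (-1) ^ n * ∏ j ∈ (Finset.range n).filter (fun j => ¬ p ∣ j), (j : ℤ_[p])

open Finset Nat

theorem prod_range_natCast_sub_self {R : Type*} [CommRing R] (n : ℕ) :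
    ∏ i ∈ range n, ((i : R) - n) = (-1) ^ n * n ! := by
  calc ∏ i ∈ range n, ((i : R) - n) = ∏ i ∈ range n, (-1 * ((n : R) - i)) :=
        prod_congr rfl fun i _ ↦ by ring
    _ = (-1) ^ n * n ! := by
        rw [prod_mul_distrib, prod_const, card_range, prod_range_natCast_sub,
          ← descFactorial_eq_prod_range, descFactorial_self]

theorem prod_range_natCast_add_one {R : Type*} [CommSemiring R] (n : ℕ) :
    ∏ i ∈ range n, ((i : R) + 1) = n ! := by
  rw [← prod_range_add_one_eq_factorial]
  push_cast
  rfl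

theorem ZMod.factorial_mul_factorial_of_add_eq {p : ℕ} [Fact p.Prime] {a b : ℕ}
    (h : a + b + 1 = p) : (a ! * b ! : ZMod p) = (-1) ^ (b + 1) := by
  subst h
  have hp : (a + b + 1 : ZMod (a + b + 1)) = 0 := by
    exact_mod_cast ZMod.natCast_self (a + b + 1)
  have hwilson := ZMod.wilsons_lemma (p := a + b + 1)
  rw [add_tsub_cancel_right, ← factorial_mul_ascFactorial, ascFactorial_eq_prod_range] at hwilson
  have hreflect : ∏ i ∈ range b, ((a + 1 + i : ℕ) : ZMod (a + b + 1)) = (-1) ^ b * b ! := by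
    rw [← prod_range_natCast_sub_self]
    exact prod_congr rfl fun i _ ↦ by push_cast; linear_combination hp
  rw [Nat.cast_mul, Nat.cast_prod, hreflect] at hwilson
  have hsq : ((-1 : ZMod (a + b + 1)) ^ b) ^ 2 = 1 := by
    rw [← pow_mul, pow_mul', neg_one_sq, one_pow]
  linear_combination (-1 : ZMod (a + b + 1)) ^ b * hwilson - (a ! * b ! : ZMod (a + b + 1)) * hsq

namespace PadicInt

variable {p : ℕ} [Fact p.Prime]

theorem toZMod_eq_zero_iff_norm_lt_one {x : ℤ_[p]} : toZMod x = 0 ↔ ‖x‖ < 1 := by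
  rw [← RingHom.mem_ker, ker_toZMod, IsLocalRing.mem_maximalIdeal, mem_nonunits]

theorem toZMod_eq_toZMod_iff_dist_lt_one {x y : ℤ_[p]} :
    toZMod x = toZMod y ↔ dist x y < 1 := by
  rw [← sub_eq_zero, ← map_sub, toZMod_eq_zero_iff_norm_lt_one, dist_eq_norm]

theorem toZMod_ne_zero_iff_isUnit {x : ℤ_[p]} : toZMod x ≠ 0 ↔ IsUnit x := by
  rw [ne_eq, ← RingHom.mem_ker, ker_toZMod, IsLocalRing.mem_maximalIdeal, mem_nonunits_iff,
    not_not]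

theorem exists_eq_coe_toZMod_eq_of_dist_lt_one {y : ℚ_[p]} {x : ℤ_[p]} (h : dist y x < 1) :
    ∃ w : ℤ_[p], y = w ∧ toZMod w = toZMod x := by
  rw [dist_eq_norm] at h
  let e : ℤ_[p] := ⟨y - x, h.le⟩
  refine ⟨x + e, (add_sub_cancel (x : ℚ_[p]) y).symm, ?_⟩
  rw [map_add, toZMod_eq_zero_iff_norm_lt_one.mpr (show ‖e‖ < 1 from h), add_zero]

theorem norm_p_mul_div_le {x u : ℤ_[p]} (hx : toZMod x = 0) (hu : toZMod u ≠ 0) :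
    ‖(p : ℚ_[p]) * x / u‖ ≤ (p : ℝ) ^ (-2 : ℤ) := by
  have hx' : ‖x‖ ≤ (p : ℝ) ^ (-1 : ℤ) := by
    rw [norm_le_pow_iff_norm_lt_pow_add_one]
    simpa using toZMod_eq_zero_iff_norm_lt_one.mp hx
  have hp : (p : ℝ) ≠ 0 := by exact_mod_cast (Fact.out : p.Prime).ne_zero
  rw [norm_div, norm_mul, Padic.norm_p, padic_norm_e_of_padicInt, padic_norm_e_of_padicInt,
    isUnit_iff.mp (toZMod_ne_zero_iff_isUnit.mp hu), div_one]
  calc (p : ℝ)⁻¹ * ‖x‖ ≤ (p : ℝ)⁻¹ * (p : ℝ) ^ (-1 : ℤ) := by gcongr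
    _ = (p : ℝ) ^ (-2 : ℤ) := by rw [← zpow_neg_one, ← zpow_add₀ hp]; norm_num

end PadicInt

section MoritaGamma

open PadicInt

variable {p : ℕ} [Fact p.Prime]

theorem moritaGammaNat_succ (n : ℕ) :
    moritaGammaNat p (n + 1) = -moritaGammaNat p n * if p ∣ n then 1 else (n : ℤ_[p]) := by
  unfold moritaGammaNat
  rw [range_add_one, filter_insert]
  split_ifs
  · simp [pow_succ]
  · rw [prod_insert (by simp)]
    ring

theorem moritaGammaNat_succ_of_lt {n : ℕ} (hn : n < p) :
    moritaGammaNat p (n + 1) = (-1) ^ (n + 1) * n ! := by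
  induction n with
  | zero => simp [moritaGammaNat, filter_singleton]
  | succ n ih =>
    rw [moritaGammaNat_succ, ih (by omega), if_neg (Nat.not_dvd_of_pos_of_lt n.succ_pos hn),
      factorial_succ]
    push_cast
    ring

theorem toZMod_moritaGammaNat_add_self (hp : p ≠ 2) (n : ℕ) :
    toZMod (moritaGammaNat p (n + p)) = toZMod (moritaGammaNat p n) := by
  induction n with
  | zero =>
    have hp1 := (Fact.out : p.Prime).one_le
    have hΓ := moritaGammaNat_succ_of_lt (p := p) (n := p - 1) (by omega)
    rw [Nat.sub_add_cancel hp1] at hΓ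
    rw [zero_add, hΓ]
    simp [((Fact.out : p.Prime).odd_of_ne_two hp).neg_one_pow, moritaGammaNat,
      ZMod.wilsons_lemma]
  | succ n ih =>
    rw [show n + 1 + p = n + p + 1 by ring, moritaGammaNat_succ, moritaGammaNat_succ]
    by_cases h : p ∣ n <;> simp [h, Nat.dvd_add_self_right, ih]

theorem toZMod_moritaGammaNat_eq_of_natCast_eq (hp : p ≠ 2) {a b : ℕ}
    (h : (a : ZMod p) = b) : toZMod (moritaGammaNat p a) = toZMod (moritaGammaNat p b) := by
  have hperiodic (n k : ℕ) :
      toZMod (moritaGammaNat p (n + p * k)) = toZMod (moritaGammaNat p n) := by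
    induction k with
    | zero => simp
    | succ k ih => rw [mul_add_one, ← add_assoc, toZMod_moritaGammaNat_add_self hp, ih]
  rw [← Nat.mod_add_div a p, ← Nat.mod_add_div b p, hperiodic, hperiodic,
    (ZMod.natCast_eq_natCast_iff' a b p).mp h]

theorem exists_eq_coe_toZMod_eq_moritaGammaNat (hp : p ≠ 2) {G : ℤ_[p] → ℚ_[p]}
    (hG : Continuous G) (hGnat : ∀ n : ℕ, G n = moritaGammaNat p n) {z : ℤ_[p]} {n : ℕ}
    (hz : toZMod z = n) :
    ∃ w : ℤ_[p], G z = w ∧ toZMod w = toZMod (moritaGammaNat p n) := by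
  have hball : Metric.ball z 1 ⊆ G ⁻¹' Metric.ball (moritaGammaNat p n : ℚ_[p]) 1 := by
    refine (denseRange_natCast.open_subset_closure_inter Metric.isOpen_ball).trans
      (closure_minimal ?_ ((IsUltrametricDist.isClosed_ball _ _).preimage hG))
    rintro _ ⟨hk, k, rfl⟩
    rw [Metric.mem_ball, ← toZMod_eq_toZMod_iff_dist_lt_one, hz, map_natCast] at hk
    rw [Set.mem_preimage, Metric.mem_ball, hGnat, dist_eq_norm, ← PadicInt.coe_sub,
      padic_norm_e_of_padicInt, ← dist_eq_norm, ← toZMod_eq_toZMod_iff_dist_lt_one]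
    exact toZMod_moritaGammaNat_eq_of_natCast_eq hp hk
  exact exists_eq_coe_toZMod_eq_of_dist_lt_one (hball (Metric.mem_ball_self one_pos))

end MoritaGamma

theorem risingFac_div (a : ℚ) {d : ℚ} (hd : d ≠ 0) (k : ℕ) :
    risingFac (a / d) k = (∏ j ∈ range k, (a + d * j)) / d ^ k := by
  calc risingFac (a / d) k = ∏ j ∈ range k, ((a + d * j) / d) :=
        prod_congr rfl fun j _ ↦ by field_simp
    _ = (∏ j ∈ range k, (a + d * j)) / d ^ k := by
        rw [prod_div_distrib, prod_const, card_range]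

theorem risingFac_three_fourths_div_five_fourths (k : ℕ) :
    risingFac (3 / 4) k / risingFac (5 / 4) k =
      ((∏ j ∈ range k, (3 + 4 * j) : ℕ) : ℚ) / ((∏ j ∈ range k, (5 + 4 * j) : ℕ) : ℚ) := by
  rw [risingFac_div _ four_ne_zero, risingFac_div _ four_ne_zero,
    div_div_div_cancel_right₀ (pow_ne_zero _ four_ne_zero)]
  push_cast
  rfl

section ThreeModFour

variable {q : ℕ} [Fact (4 * q + 3).Prime]

local notation "K" => ZMod (4 * q + 3)

theorem four_mul_add_three_eq_zero : (4 * q + 3 : K) = 0 := by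
  exact_mod_cast ZMod.natCast_self (4 * q + 3)

theorem four_mul_succ_eq_one : (4 : K) * (q + 1) = 1 := by
  linear_combination (four_mul_add_three_eq_zero (q := q))

theorem toZMod_eq_succ_of_four_mul_eq_one {z : ℤ_[4 * q + 3]} (hz : 4 * z = 1) :
    PadicInt.toZMod z = ((q + 1 : ℕ) : K) := by
  have h := congrArg PadicInt.toZMod hz
  rw [map_mul, map_ofNat, map_one, ← four_mul_succ_eq_one] at h
  push_cast
  exact mul_left_cancel₀ (left_ne_zero_of_mul_eq_one (four_mul_succ_eq_one (q := q))) h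

theorem prod_three_add_four_mul_lower :
    ∏ j ∈ range q, (3 + 4 * (j : K)) = (-1) ^ q * 4 ^ q * q ! := by
  calc ∏ j ∈ range q, (3 + 4 * (j : K)) = ∏ j ∈ range q, (4 * ((j : K) - q)) :=
        prod_congr rfl fun j _ ↦ by
          linear_combination (four_mul_add_three_eq_zero (q := q))
    _ = (-1) ^ q * 4 ^ q * q ! := by
        rw [prod_mul_distrib, prod_const, card_range, prod_range_natCast_sub_self]
        ring

theorem prod_three_add_four_mul_upper :
    ∏ j ∈ range q, (3 + 4 * ((q : K) + 1 + j)) = 4 ^ q * q ! := by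
  calc ∏ j ∈ range q, (3 + 4 * ((q : K) + 1 + j)) = ∏ j ∈ range q, (4 * ((j : K) + 1)) :=
        prod_congr rfl fun j _ ↦ by
          linear_combination (four_mul_add_three_eq_zero (q := q))
    _ = 4 ^ q * q ! := by rw [prod_mul_distrib, prod_const, card_range, prod_range_natCast_add_one]

theorem factorial_mul_prod_five_add_four_mul :
    ((q + 1) ! * q ! : K) * ∏ j ∈ range (q + 1 + q), (5 + 4 * (j : K)) =
      (-1) ^ (q + 1) * 4 ^ (q + 1 + q) := by
  have hshift : ∏ j ∈ range (q + 1 + q), (5 + 4 * (j : K)) =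
      4 ^ (q + 1 + q) * ∏ j ∈ range (q + 1 + q), ((q + 2 + j : ℕ) : K) := by
    calc ∏ j ∈ range (q + 1 + q), (5 + 4 * (j : K))
        = ∏ j ∈ range (q + 1 + q), (4 * ((q + 2 + j : ℕ) : K)) :=
          prod_congr rfl fun j _ ↦ by
            push_cast
            linear_combination -(four_mul_add_three_eq_zero (q := q))
      _ = _ := by rw [prod_mul_distrib, prod_const, card_range]
  have hfactorial :
      ((q + 1) ! : K) * ∏ j ∈ range (q + 1 + q), ((q + 2 + j : ℕ) : K) = (3 * q + 2) ! := by
    rw [← Nat.cast_prod, ← ascFactorial_eq_prod_range, ← Nat.cast_mul, factorial_mul_ascFactorial]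
    congr 2
    ring
  have hwilson := ZMod.factorial_mul_factorial_of_add_eq (p := 4 * q + 3) (a := 3 * q + 2)
    (b := q) (by ring)
  rw [hshift]
  linear_combination 4 ^ (q + 1 + q) * hwilson + (4 ^ (q + 1 + q) * q ! : K) * hfactorial

theorem sixteen_mul_prod_five_add_four_mul_ne_zero :
    16 * ∏ j ∈ range (q + 1 + q), (5 + 4 * (j : K)) ≠ 0 := by
  have h4 : (4 : K) ≠ 0 := left_ne_zero_of_mul_eq_one four_mul_succ_eq_one
  refine mul_ne_zero (by simpa [show (16 : K) = 4 ^ 2 by norm_num] using h4)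
    (right_ne_zero_of_mul (a := ((q + 1) ! * q ! : K)) ?_)
  rw [factorial_mul_prod_five_add_four_mul]
  exact mul_ne_zero (pow_ne_zero _ (neg_ne_zero.mpr one_ne_zero)) (pow_ne_zero _ h4)

theorem sixteen_mul_prod_add_prod_mul_eq_zero :
    16 * (∏ j ∈ range q, (3 + 4 * (j : K))) * ∏ j ∈ range q, (3 + 4 * ((q : K) + 1 + j)) +
      (∏ j ∈ range (q + 1 + q), (5 + 4 * (j : K))) * ((-1) ^ (q + 1) * q !) ^ 4 = 0 := by
  have hdenominator := factorial_mul_prod_five_add_four_mul (q := q)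
  rw [factorial_succ, Nat.cast_mul] at hdenominator
  push_cast at hdenominator
  have hsign : ((-1 : K) ^ (q + 1) * q !) ^ 4 = (q ! : K) ^ 4 := by
    rw [mul_pow, ← pow_mul, Even.neg_one_pow ⟨2 * (q + 1), by ring⟩, one_mul]
  rw [prod_three_add_four_mul_lower, prod_three_add_four_mul_upper, hsign]
  linear_combination 4 * (q ! : K) ^ 2 * hdenominator -
    (q ! : K) ^ 4 * (∏ j ∈ range (q + 1 + q), (5 + 4 * (j : K))) * four_mul_succ_eq_one (q := q)

theorem norm_risingFac_div_sub_le {w : ℤ_[4 * q + 3]}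
    (hw : PadicInt.toZMod w = (-1) ^ (q + 1) * q !) :
    ‖((risingFac (3 / 4) (q + 1 + q) / risingFac (5 / 4) (q + 1 + q) : ℚ) : ℚ_[4 * q + 3]) -
      -(((4 * q + 3 : ℕ) : ℚ_[4 * q + 3]) / 16) * (w : ℚ_[4 * q + 3]) ^ 4‖ ≤
      ((4 * q + 3 : ℕ) : ℝ) ^ (-2 : ℤ) := by
  rw [risingFac_three_fourths_div_five_fourths, prod_range_add, prod_range_succ]
  set L := ∏ j ∈ range q, (3 + 4 * j)
  set R := ∏ j ∈ range q, (3 + 4 * (q + 1 + j))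
  set B := ∏ j ∈ range (q + 1 + q), (5 + 4 * j)
  have hx : PadicInt.toZMod (((16 * L * R : ℕ) : ℤ_[4 * q + 3]) + (B : ℤ_[4 * q + 3]) * w ^ 4)
      = 0 := by
    simp only [map_add, map_mul, map_pow, map_natCast, hw, L, R, B]
    push_cast
    exact sixteen_mul_prod_add_prod_mul_eq_zero
  have hu : PadicInt.toZMod ((16 * B : ℕ) : ℤ_[4 * q + 3]) ≠ 0 := by
    simp only [map_natCast, B]
    push_cast
    exact sixteen_mul_prod_five_add_four_mul_ne_zero
  have hB : (B : ℚ_[4 * q + 3]) ≠ 0 :=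
    Nat.cast_ne_zero.mpr (prod_ne_zero_iff.mpr fun j _ ↦ by omega)
  convert PadicInt.norm_p_mul_div_le hx hu using 2
  simp only [PadicInt.coe_add, PadicInt.coe_mul, PadicInt.coe_pow, PadicInt.coe_natCast]
  push_cast
  field_simp
  ring

end ThreeModFour

/-- For primes p ≡ 3 (mod 4), (3/4)_{(p-1)/2}/(5/4)_{(p-1)/2} ≡ -(p/16)Γ_p(1/4)^4 (mod p^2),
where Γ_p is the (unique) continuous extension to ℤ_p of `moritaGammaNat` and
1/4 is the inverse of 4 in ℤ_p. -/
theorem stmt16 (p : ℕ) [Fact p.Prime] (h4 : p % 4 = 3)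
    (G : ℤ_[p] → ℚ_[p]) (hGcont : Continuous G)
    (hGnat : ∀ n : ℕ, G (n : ℤ_[p]) = ((moritaGammaNat p n : ℤ_[p]) : ℚ_[p]))
    (z : ℤ_[p]) (hz : 4 * z = 1) :
    ‖((risingFac (3/4) ((p - 1) / 2) / risingFac (5/4) ((p - 1) / 2) : ℚ) : ℚ_[p])
      - (-((p : ℚ_[p]) / 16) * (G z) ^ 4)‖ ≤ (p : ℝ) ^ (-(2 : ℤ)) := by
  obtain ⟨q, rfl⟩ : ∃ q, p = 4 * q + 3 := ⟨p / 4, by omega⟩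
  obtain ⟨w, hGw, hw⟩ := exists_eq_coe_toZMod_eq_moritaGammaNat (by omega) hGcont hGnat
    (toZMod_eq_succ_of_four_mul_eq_one hz)
  rw [moritaGammaNat_succ_of_lt (by omega)] at hw
  rw [show (4 * q + 3 - 1) / 2 = q + 1 + q by omega, hGw]
  exact norm_risingFac_div_sub_le (by simpa using hw)
end
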